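/- arXiv:1907.11417 — 2 statements merged into one kernel-verified Lean document; each statement's English description precedes it below -/
import Mathlib

section
/- For all two-colored partitions p and p': (a) F({p ⊗ p'}) = F({p, p'}); (b) V({p ⊗ p'}) = V({p, p'}); (c) Σ(p ⊗ p') = Σ(p) + Σ(p'); and (d) for each Y ∈ {L, K, X}, Y({p ⊗ p'}) ⊆ Y({p, p'}) + gcd(Σ(p), Σ(p'))·ℤ. -/
noncomputable section
attribute [local instance] Classical.propDecidable

/-- A two-colored partition: two rows of points colored white (`true`) or black (`false`),
together with a set partition (setoid) of all points into blocks. -/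
structure TCP where
  upper : ℕ
  lower : ℕ
  upColor : Fin upper → Bool
  loColor : Fin lower → Bool
  rel : Setoid (Fin upper ⊕ Fin lower)

namespace TCP

/-- The points of a partition. -/
abbrev Point (p : TCP) := Fin p.upper ⊕ Fin p.lower

/-- Native color of a point. -/
def color (p : TCP) : p.Point → Bool
  | .inl j => p.upColor j
  | .inr i => p.loColor i

/-- Normalized color: inverted on the upper row. -/
def ncolor (p : TCP) : p.Point → Bool
  | .inl j => !(p.upColor j)
  | .inr i => p.loColor i

/-- Sign of a point: `+1` for normalized white, `-1` for normalized black. -/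
def sgn (p : TCP) (x : p.Point) : ℤ := if p.ncolor x then 1 else -1

/-- Color sum of a finite set of points. -/
def csum (p : TCP) (S : Finset p.Point) : ℤ := ∑ x ∈ S, p.sgn x

/-- Total color sum Σ(p). -/
def tsum (p : TCP) : ℤ := p.csum Finset.univ

/-- Total number of points. -/
def size (p : TCP) : ℕ := p.upper + p.lower

/-- Position in the counter-clockwise cyclic order: lower points left to right,
then upper points right to left. -/
def pos (p : TCP) : p.Point → ℕ
  | .inr i => i
  | .inl j => p.lower + (p.upper - 1 - j)

/-- Cyclic position of `y` relative to `x`. -/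
def relpos (p : TCP) (x y : p.Point) : ℕ := (p.size + p.pos y - p.pos x) % p.size

/-- Half-open cyclic interval `]x,y]`. -/
def Ioc (p : TCP) (x y : p.Point) : Finset p.Point :=
  Finset.univ.filter (fun z => 0 < p.relpos x z ∧ p.relpos x z ≤ p.relpos x y)

/-- Open cyclic interval `]x,y[`. -/
def Ioo (p : TCP) (x y : p.Point) : Finset p.Point :=
  Finset.univ.filter (fun z => 0 < p.relpos x z ∧ p.relpos x z < p.relpos x y)

/-- The color distance between two points. -/
def cdist (p : TCP) (x y : p.Point) : ℤ :=
  if x = y then p.tsum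
  else if p.ncolor x = p.ncolor y then p.csum (p.Ioc x y)
  else p.csum (p.Ioo x y)

/-- The block of a point. -/
def blockOf (p : TCP) (x : p.Point) : Finset p.Point :=
  Finset.univ.filter (fun y => p.rel.r x y)

/-- A finite set of points is a block of `p`. -/
def IsBlock (p : TCP) (B : Finset p.Point) : Prop := ∃ x, B = p.blockOf x

/-- `(a,b,c,d)` is ordered in the cyclic order of `p`. -/
def Ordered4 (p : TCP) (a b c d : p.Point) : Prop :=
  0 < p.relpos a b ∧ p.relpos a b < p.relpos a c ∧ p.relpos a c < p.relpos a d

/-- Two sets of points cross each other. -/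
def Cross (p : TCP) (B₁ B₂ : Finset p.Point) : Prop :=
  ∃ a ∈ B₁, ∃ b ∈ B₁, ∃ a' ∈ B₂, ∃ b' ∈ B₂, p.Ordered4 a a' b b'

/-! ### The analyzer -/

/-- Set of block sizes. -/
def Fset (S : Set TCP) : Set ℕ :=
  {n | ∃ p ∈ S, ∃ B : Finset p.Point, p.IsBlock B ∧ B.card = n}

/-- Set of block color sums. -/
def Vset (S : Set TCP) : Set ℤ :=
  {v | ∃ p ∈ S, ∃ B : Finset p.Point, p.IsBlock B ∧ p.csum B = v}

/-- Set of total color sums. -/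
def Sset (S : Set TCP) : Set ℤ := {s | ∃ p ∈ S, p.tsum = s}

/-- Set of color distances between cyclically subsequent legs of the same block
having the same normalized color. -/
def Lset (S : Set TCP) : Set ℤ :=
  {d | ∃ p ∈ S, ∃ B : Finset p.Point, p.IsBlock B ∧ ∃ a ∈ B, ∃ b ∈ B, a ≠ b ∧
        p.Ioo a b ∩ B = ∅ ∧ p.ncolor a = p.ncolor b ∧ p.cdist a b = d}

/-- Set of color distances between cyclically subsequent legs of the same block
having different normalized colors. -/
def Kset (S : Set TCP) : Set ℤ :=
  {d | ∃ p ∈ S, ∃ B : Finset p.Point, p.IsBlock B ∧ ∃ a ∈ B, ∃ b ∈ B, a ≠ b ∧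
        p.Ioo a b ∩ B = ∅ ∧ p.ncolor a ≠ p.ncolor b ∧ p.cdist a b = d}

/-- Set of color distances between legs of two crossing blocks. -/
def Xset (S : Set TCP) : Set ℤ :=
  {d | ∃ p ∈ S, ∃ B₁ B₂ : Finset p.Point, p.IsBlock B₁ ∧ p.IsBlock B₂ ∧ B₁ ≠ B₂ ∧
        p.Cross B₁ B₂ ∧ ∃ a ∈ B₁, ∃ b ∈ B₂, p.cdist a b = d}

/-- The parameter domain. -/
abbrev Param := Set ℕ × Set ℤ × Set ℤ × Set ℤ × Set ℤ × Set ℤ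

/-- The analyzer `Z = (F, V, Σ, L, K, X)`. -/
def Z (S : Set TCP) : Param := (Fset S, Vset S, Sset S, Lset S, Kset S, Xset S)

/-! ### Operations on partitions -/

/-- Componentwise relation on a sum type. -/
def sumRel {α β : Type*} (s : α → α → Prop) (t : β → β → Prop) : α ⊕ β → α ⊕ β → Prop
  | .inl a, .inl b => s a b
  | .inr a, .inr b => t a b
  | _, _ => False

/-- Componentwise setoid on a sum type. -/
def sumSetoid {α β : Type*} (s : Setoid α) (t : Setoid β) : Setoid (α ⊕ β) where
  r := sumRel s.r t.r
  iseqv := by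
    refine ⟨?_, ?_, ?_⟩
    · rintro (a | a) <;> exact Setoid.refl _
    · rintro (a | a) (b | b) h <;> first | exact Setoid.symm h | exact h.elim
    · rintro (a | a) (b | b) (c | c) h₁ h₂ <;>
        first | exact Setoid.trans h₁ h₂ | exact h₁.elim | exact h₂.elim

/-- Identification of the points of a tensor product with a sum of points. -/
def ptmap (p q : TCP) :
    (Fin (p.upper + q.upper) ⊕ Fin (p.lower + q.lower)) → (p.Point ⊕ q.Point)
  | .inl j => (finSumFinEquiv.symm j).elim (fun a => .inl (.inl a)) (fun a => .inr (.inl a))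
  | .inr i => (finSumFinEquiv.symm i).elim (fun a => .inl (.inr a)) (fun a => .inr (.inr a))

/-- Tensor product: horizontal concatenation. -/
def tensor (p q : TCP) : TCP where
  upper := p.upper + q.upper
  lower := p.lower + q.lower
  upColor := fun j => (finSumFinEquiv.symm j).elim p.upColor q.upColor
  loColor := fun i => (finSumFinEquiv.symm i).elim p.loColor q.loColor
  rel := Setoid.comap (ptmap p q) (sumSetoid p.rel q.rel)

/-- Embedding of the points of `p` into the points of `p.tensor q`. -/
def tinl (p q : TCP) : p.Point → (p.tensor q).Point
  | .inl j => Sum.inl (Fin.castAdd q.upper j)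
  | .inr i => Sum.inr (Fin.castAdd q.lower i)

/-- Embedding of the points of `q` into the points of `p.tensor q`. -/
def tinr (p q : TCP) : q.Point → (p.tensor q).Point
  | .inl j => Sum.inl (Fin.natAdd p.upper j)
  | .inr i => Sum.inr (Fin.natAdd p.lower i)

/-- Involution: swapping the rows. -/
def invol (p : TCP) : TCP where
  upper := p.lower
  lower := p.upper
  upColor := p.loColor
  loColor := p.upColor
  rel := Setoid.comap Sum.swap p.rel

/-- `(p, q)` is composable: the upper row of `p` matches the lower row of `q`. -/
structure Composable (p q : TCP) : Prop where
  len : p.upper = q.lower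
  col : ∀ j : Fin p.upper, p.upColor j = q.loColor (Fin.cast len j)

/-- Generating relation for the composition of `p` and `q`. -/
def compRel (p q : TCP) (h : p.upper = q.lower) :
    (q.Point ⊕ p.Point) → (q.Point ⊕ p.Point) → Prop := fun x y =>
  (∃ a b, x = .inl a ∧ y = .inl b ∧ q.rel.r a b) ∨
  (∃ a b, x = .inr a ∧ y = .inr b ∧ p.rel.r a b) ∨
  (∃ j : Fin p.upper, x = .inl (.inr (Fin.cast h j)) ∧ y = .inr (.inl j)) ∨
  (∃ j : Fin p.upper, y = .inl (.inr (Fin.cast h j)) ∧ x = .inr (.inl j))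

/-- Composition: vertical concatenation, with blocks joined along the middle row. -/
def comp (p q : TCP) (h : Composable p q) : TCP where
  upper := q.upper
  lower := p.lower
  upColor := q.upColor
  loColor := p.loColor
  rel := Setoid.comap
    (fun x : Fin q.upper ⊕ Fin p.lower => match x with
      | .inl j => Sum.inl (Sum.inl j : q.Point)
      | .inr i => Sum.inr (Sum.inr i : p.Point))
    (Relation.EqvGen.setoid (compRel p q h.len))

/-- The empty partition. -/
def emptyP : TCP := ⟨0, 0, Fin.elim0, Fin.elim0, ⊤⟩

/-- The identity partition of color `c`: one upper and one lower point of color `c`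
joined in one block. -/
def idPart (c : Bool) : TCP := ⟨1, 1, fun _ => c, fun _ => c, ⊤⟩

/-- The one-row pair partition with two lower points of colors `c₁`, `c₂` in one block. -/
def lpair (c₁ c₂ : Bool) : TCP := ⟨0, 2, Fin.elim0, fun i => if i = 0 then c₁ else c₂, ⊤⟩

/-- A category of two-colored partitions. -/
def IsCategory (C : Set TCP) : Prop :=
  emptyP ∈ C ∧ idPart true ∈ C ∧ idPart false ∈ C ∧
  lpair true false ∈ C ∧ lpair false true ∈ C ∧
  (∀ p q, p ∈ C → q ∈ C → p.tensor q ∈ C) ∧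
  (∀ p, p ∈ C → p.invol ∈ C) ∧
  (∀ p q (h : Composable p q), p ∈ C → q ∈ C → comp p q h ∈ C)

/-! ### Rotations, verticolor reflection, erasing -/

/-- Rotate the leftmost upper point down (identity if the upper row is empty). -/
def rotDownL (p : TCP) : TCP :=
  if h : 0 < p.upper then
    { upper := p.upper - 1
      lower := p.lower + 1
      upColor := fun j => p.upColor ⟨j + 1, by have := j.isLt; omega⟩
      loColor := fun i => Fin.cases (!(p.upColor ⟨0, h⟩)) (fun i' => p.loColor i') i
      rel := Setoid.comap
        (fun x : Fin (p.upper - 1) ⊕ Fin (p.lower + 1) => match x with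
          | .inl j => (Sum.inl ⟨j + 1, by have := j.isLt; omega⟩ : p.Point)
          | .inr i => Fin.cases (Sum.inl ⟨0, h⟩ : p.Point) (fun i' => (Sum.inr i' : p.Point)) i)
        p.rel }
  else p

/-- Rotate the rightmost upper point down (identity if the upper row is empty). -/
def rotDownR (p : TCP) : TCP :=
  if h : 0 < p.upper then
    { upper := p.upper - 1
      lower := p.lower + 1
      upColor := fun j => p.upColor ⟨j, by have := j.isLt; omega⟩
      loColor := fun i =>
        Fin.lastCases (!(p.upColor ⟨p.upper - 1, by omega⟩)) (fun i' => p.loColor i') i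
      rel := Setoid.comap
        (fun x : Fin (p.upper - 1) ⊕ Fin (p.lower + 1) => match x with
          | .inl j => (Sum.inl ⟨j, by have := j.isLt; omega⟩ : p.Point)
          | .inr i => Fin.lastCases (Sum.inl ⟨p.upper - 1, by omega⟩ : p.Point)
              (fun i' => (Sum.inr i' : p.Point)) i)
        p.rel }
  else p

/-- Rotate the leftmost lower point up (identity if the lower row is empty). -/
def rotUpL (p : TCP) : TCP :=
  if h : 0 < p.lower then
    { upper := p.upper + 1
      lower := p.lower - 1
      upColor := fun j => Fin.cases (!(p.loColor ⟨0, h⟩)) (fun j' => p.upColor j') j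
      loColor := fun i => p.loColor ⟨i + 1, by have := i.isLt; omega⟩
      rel := Setoid.comap
        (fun x : Fin (p.upper + 1) ⊕ Fin (p.lower - 1) => match x with
          | .inl j => Fin.cases (Sum.inr ⟨0, h⟩ : p.Point) (fun j' => (Sum.inl j' : p.Point)) j
          | .inr i => (Sum.inr ⟨i + 1, by have := i.isLt; omega⟩ : p.Point))
        p.rel }
  else p

/-- Rotate the rightmost lower point up (identity if the lower row is empty). -/
def rotUpR (p : TCP) : TCP :=
  if h : 0 < p.lower then
    { upper := p.upper + 1
      lower := p.lower - 1
      upColor := fun j =>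
        Fin.lastCases (!(p.loColor ⟨p.lower - 1, by omega⟩)) (fun j' => p.upColor j') j
      loColor := fun i => p.loColor ⟨i, by have := i.isLt; omega⟩
      rel := Setoid.comap
        (fun x : Fin (p.upper + 1) ⊕ Fin (p.lower - 1) => match x with
          | .inl j => Fin.lastCases (Sum.inr ⟨p.lower - 1, by omega⟩ : p.Point)
              (fun j' => (Sum.inl j' : p.Point)) j
          | .inr i => (Sum.inr ⟨i, by have := i.isLt; omega⟩ : p.Point))
        p.rel }
  else p

/-- Verticolor reflection: reverse both rows and invert all colors. -/
def vreflect (p : TCP) : TCP where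
  upper := p.upper
  lower := p.lower
  upColor := fun j => !(p.upColor j.rev)
  loColor := fun i => !(p.loColor i.rev)
  rel := Setoid.comap (Sum.map Fin.rev Fin.rev) p.rel

/-- `{a, b}` is a turn: two cyclically consecutive points of inverse normalized colors. -/
def IsTurn (p : TCP) (a b : p.Point) : Prop :=
  p.relpos a b = 1 ∧ p.ncolor a ≠ p.ncolor b

/-- `e` identifies the points of `q` with the points of `p` outside `{a, b}`, preserving
rows, colors and order, and `q` carries the block structure obtained from `p` by erasing
`{a, b}` and merging all blocks meeting `{a, b}`. -/
def IsErasingMap (p : TCP) (a b : p.Point) (q : TCP) (e : q.Point → p.Point) : Prop :=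
  Function.Injective e ∧
  Set.range e = {x | x ≠ a ∧ x ≠ b} ∧
  (∀ j : Fin q.upper, ∃ j', e (.inl j) = Sum.inl j') ∧
  (∀ i : Fin q.lower, ∃ i', e (.inr i) = Sum.inr i') ∧
  (∀ j₁ j₂ : Fin q.upper, ∀ j₁' j₂' : Fin p.upper,
    e (.inl j₁) = Sum.inl j₁' → e (.inl j₂) = Sum.inl j₂' → (j₁ < j₂ ↔ j₁' < j₂')) ∧
  (∀ i₁ i₂ : Fin q.lower, ∀ i₁' i₂' : Fin p.lower,
    e (.inr i₁) = Sum.inr i₁' → e (.inr i₂) = Sum.inr i₂' → (i₁ < i₂ ↔ i₁' < i₂')) ∧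
  (∀ x, q.color x = p.color (e x)) ∧
  (∀ x y, q.rel.r x y ↔
    (p.rel.r (e x) (e y) ∨
      ((p.rel.r (e x) a ∨ p.rel.r (e x) b) ∧ (p.rel.r (e y) a ∨ p.rel.r (e y) b))))

/-- `q` is obtained from `p` by erasing the turn `{a, b}`. -/
def IsErasing (p : TCP) (a b : p.Point) (q : TCP) : Prop :=
  p.IsTurn a b ∧ ∃ e : q.Point → p.Point, IsErasingMap p a b q e

end TCP

open Pointwise

/-! The points of `p ⊗ p'` are a copy of the points of `p` followed, in the cyclic order, by a
copy of the points of `p'` occupying one arc, and no block meets both copies. Hence the blocks of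
`p ⊗ p'` are those of `p` and of `p'`, with the same sizes and color sums. Between two points of
the same copy the cyclic order is unchanged, and an interval between them either misses the arc of
the other copy or contains all of it; so each color distance changes by `0` or by the total color
sum of the other factor. Blocks from different copies cannot cross: seen from a block of one
copy, all points of the other copy lie in a single arc between two of its consecutive legs. -/

lemma mem_add_dvd_of_dvd_sub {A : Set ℤ} {a d g : ℤ} (ha : a ∈ A) (h : g ∣ d - a) :
    d ∈ A + {n | g ∣ n} :=
  ⟨a, ha, d - a, h, add_sub_cancel a d⟩

namespace TCP

/-- `Lset` and `Kset` are `legDistSet (· = ·)` and `legDistSet (· ≠ ·)`. -/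
def legDistSet (R : Bool → Bool → Prop) (S : Set TCP) : Set ℤ :=
  {d | ∃ p ∈ S, ∃ B : Finset p.Point, p.IsBlock B ∧ ∃ a ∈ B, ∃ b ∈ B, a ≠ b ∧
        p.Ioo a b ∩ B = ∅ ∧ R (p.ncolor a) (p.ncolor b) ∧ p.cdist a b = d}

/-- An embedding of the points of `r` into those of `T` that preserves normalized colors and
blocks, such that no block meets both the image and its complement, and such that, seen from
`f x`, the complement is an arc of `gap` consecutive points starting `cut x` steps after `f x`. -/
structure ArcEmbedding (r T : TCP) where
  toFun : r.Point → T.Point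
  injective : Function.Injective toFun
  ncolor_apply : ∀ x, T.ncolor (toFun x) = r.ncolor x
  rel_apply : ∀ x y, T.rel.r (toFun x) (toFun y) ↔ r.rel.r x y
  not_rel_of_notMem_range : ∀ x z, z ∉ Set.range toFun → ¬ T.rel.r (toFun x) z
  cut : r.Point → ℕ
  cut_pos : ∀ x, 0 < cut x
  gap : ℕ
  relpos_apply : ∀ x y, T.relpos (toFun x) (toFun y) =
    r.relpos x y + if cut x ≤ r.relpos x y then gap else 0
  relpos_of_notMem_range : ∀ x z, z ∉ Set.range toFun →
    cut x ≤ T.relpos (toFun x) z ∧ T.relpos (toFun x) z < cut x + gap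

namespace ArcEmbedding

variable {r T : TCP} (f : ArcEmbedding r T)

instance : CoeFun (ArcEmbedding r T) (fun _ => r.Point → T.Point) := ⟨toFun⟩

lemma blockOf_apply (x : r.Point) : T.blockOf (f x) = (r.blockOf x).image f := by
  ext z
  by_cases hz : z ∈ Set.range f
  · obtain ⟨w, rfl⟩ := hz
    simp [blockOf, f.rel_apply, f.injective.eq_iff]
  · have hz' : ∀ w, f w ≠ z := fun w h => hz ⟨w, h⟩
    simp [blockOf, f.not_rel_of_notMem_range x z hz, hz']

lemma isBlock_image {B : Finset r.Point} (hB : r.IsBlock B) : T.IsBlock (B.image f) := by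
  obtain ⟨x, rfl⟩ := hB
  exact ⟨f x, (f.blockOf_apply x).symm⟩

lemma sgn_apply (x : r.Point) : T.sgn (f x) = r.sgn x := by
  simp only [sgn, f.ncolor_apply]

lemma csum_image (S : Finset r.Point) : T.csum (S.image f) = r.csum S := by
  rw [csum, Finset.sum_image fun x _ y _ h => f.injective h]
  exact Finset.sum_congr rfl fun x _ => f.sgn_apply x

lemma relpos_apply_pos_iff (x y : r.Point) : 0 < T.relpos (f x) (f y) ↔ 0 < r.relpos x y := by
  have := f.cut_pos x
  rw [f.relpos_apply]
  split_ifs <;> omega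

lemma relpos_apply_lt_iff (x y z : r.Point) :
    T.relpos (f x) (f y) < T.relpos (f x) (f z) ↔ r.relpos x y < r.relpos x z := by
  rw [f.relpos_apply, f.relpos_apply]
  split_ifs <;> omega

lemma relpos_apply_le_iff (x y z : r.Point) :
    T.relpos (f x) (f y) ≤ T.relpos (f x) (f z) ↔ r.relpos x y ≤ r.relpos x z := by
  rw [f.relpos_apply, f.relpos_apply]
  split_ifs <;> omega

lemma apply_mem_Ioo_iff (x y w : r.Point) : f w ∈ T.Ioo (f x) (f y) ↔ w ∈ r.Ioo x y := by
  simp only [Ioo, Finset.mem_filter, Finset.mem_univ, true_and, f.relpos_apply_pos_iff,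
    f.relpos_apply_lt_iff]

lemma apply_mem_Ioc_iff (x y w : r.Point) : f w ∈ T.Ioc (f x) (f y) ↔ w ∈ r.Ioc x y := by
  simp only [Ioc, Finset.mem_filter, Finset.mem_univ, true_and, f.relpos_apply_pos_iff,
    f.relpos_apply_le_iff]

lemma mem_Ioo_iff_of_notMem_range (x y : r.Point) {z : T.Point} (hz : z ∉ Set.range f) :
    z ∈ T.Ioo (f x) (f y) ↔ f.cut x ≤ r.relpos x y := by
  have := f.relpos_of_notMem_range x z hz
  have := f.cut_pos x
  simp only [Ioo, Finset.mem_filter, Finset.mem_univ, true_and, f.relpos_apply]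
  split_ifs <;> omega

lemma mem_Ioc_iff_of_notMem_range (x y : r.Point) {z : T.Point} (hz : z ∉ Set.range f) :
    z ∈ T.Ioc (f x) (f y) ↔ f.cut x ≤ r.relpos x y := by
  have := f.relpos_of_notMem_range x z hz
  have := f.cut_pos x
  simp only [Ioc, Finset.mem_filter, Finset.mem_univ, true_and, f.relpos_apply]
  split_ifs <;> omega

lemma csum_eq_add_csum_compl {S : Finset r.Point} {S' : Finset T.Point} {P : Prop} [Decidable P]
    (h_apply : ∀ w, f w ∈ S' ↔ w ∈ S) (h_compl : ∀ z, z ∉ Set.range f → (z ∈ S' ↔ P)) :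
    T.csum S' = r.csum S + if P then T.csum (Finset.univ.image f)ᶜ else 0 := by
  have h_range : ∑ z ∈ Finset.univ.image f, (if z ∈ S' then T.sgn z else 0) = r.csum S := by
    rw [Finset.sum_image fun x _ y _ h => f.injective h, csum, ← Finset.sum_filter]
    refine Finset.sum_congr (by ext; simp [h_apply]) fun x _ => f.sgn_apply x
  have h_out : ∑ z ∈ (Finset.univ.image f)ᶜ, (if z ∈ S' then T.sgn z else 0) =
      if P then T.csum (Finset.univ.image f)ᶜ else 0 := by
    have hcompl : ∀ z ∈ (Finset.univ.image f)ᶜ, z ∉ Set.range f := by simp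
    split_ifs with hP
    · exact Finset.sum_congr rfl fun z hz => if_pos ((h_compl z (hcompl z hz)).mpr hP)
    · exact Finset.sum_eq_zero fun z hz => if_neg fun h => hP ((h_compl z (hcompl z hz)).mp h)
  rw [← h_range, ← h_out, Finset.sum_add_sum_compl, Finset.sum_ite_mem, Finset.univ_inter, csum]

lemma tsum_sub_tsum : T.tsum - r.tsum = T.csum (Finset.univ.image f)ᶜ := by
  rw [tsum, f.csum_eq_add_csum_compl (S := Finset.univ) (P := True) (by simp) (by simp)]
  simp [tsum]

lemma csum_eq_add_ite {S : Finset r.Point} {S' : Finset T.Point} {P : Prop} [Decidable P]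
    (h_apply : ∀ w, f w ∈ S' ↔ w ∈ S) (h_compl : ∀ z, z ∉ Set.range f → (z ∈ S' ↔ P)) :
    T.csum S' = r.csum S + if P then T.tsum - r.tsum else 0 := by
  rw [f.tsum_sub_tsum, f.csum_eq_add_csum_compl h_apply h_compl]

lemma tsum_sub_tsum_dvd_cdist_sub (x y : r.Point) :
    T.tsum - r.tsum ∣ T.cdist (f x) (f y) - r.cdist x y := by
  by_cases hxy : x = y
  · simp [cdist, hxy]
  have hcases : ∀ (c : ℤ) (P : Prop) [Decidable P],
      T.tsum - r.tsum ∣ (c + if P then T.tsum - r.tsum else 0) - c := by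
    intro c P _
    split_ifs <;> simp
  simp only [cdist, f.injective.ne hxy, hxy, if_false, f.ncolor_apply]
  split_ifs
  · rw [f.csum_eq_add_ite (f.apply_mem_Ioc_iff x y) fun _ => f.mem_Ioc_iff_of_notMem_range x y]
    apply hcases
  · rw [f.csum_eq_add_ite (f.apply_mem_Ioo_iff x y) fun _ => f.mem_Ioo_iff_of_notMem_range x y]
    apply hcases

lemma Ioo_inter_image_eq_empty_iff (x y : r.Point) (B : Finset r.Point) :
    T.Ioo (f x) (f y) ∩ B.image f = ∅ ↔ r.Ioo x y ∩ B = ∅ := by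
  rw [← Finset.image_eq_empty (f := f)]
  refine Eq.congr_left (Finset.ext fun z => ?_)
  simp only [Finset.mem_inter, Finset.mem_image]
  constructor
  · rintro ⟨hz, w, hw, rfl⟩
    exact ⟨w, ⟨(f.apply_mem_Ioo_iff x y w).mp hz, hw⟩, rfl⟩
  · rintro ⟨w, ⟨hw, hwB⟩, rfl⟩
    exact ⟨(f.apply_mem_Ioo_iff x y w).mpr hw, w, hwB, rfl⟩

lemma ordered4_apply_iff (a b c d : r.Point) :
    T.Ordered4 (f a) (f b) (f c) (f d) ↔ r.Ordered4 a b c d := by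
  simp only [Ordered4, f.relpos_apply_pos_iff, f.relpos_apply_lt_iff]

lemma cross_image_iff (B₁ B₂ : Finset r.Point) :
    T.Cross (B₁.image f) (B₂.image f) ↔ r.Cross B₁ B₂ := by
  simp only [Cross, Finset.exists_mem_image, f.ordered4_apply_iff]

lemma not_cross_of_disjoint_range (B₁ : Finset r.Point) {B₂ : Finset T.Point}
    (hB₂ : ∀ z ∈ B₂, z ∉ Set.range f) : ¬ T.Cross (B₁.image f) B₂ := by
  simp only [Cross, Finset.exists_mem_image, Ordered4, not_exists, not_and]
  intro x _ y _ z hz z' hz' _ hz_lt hlt_z'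
  have := f.relpos_of_notMem_range x z (hB₂ z hz)
  have := f.relpos_of_notMem_range x z' (hB₂ z' hz')
  rw [f.relpos_apply] at hz_lt hlt_z'
  split_ifs at hz_lt hlt_z' <;> omega

variable {S : Set TCP} (hr : r ∈ S) {g : ℤ} (hg : g ∣ T.tsum - r.tsum)
include hr hg

lemma cdist_mem_legDistSet_add (R : Bool → Bool → Prop) {B : Finset r.Point} (hB : r.IsBlock B)
    {a b : T.Point} (ha : a ∈ B.image f) (hb : b ∈ B.image f) (hab : a ≠ b)
    (hIoo : T.Ioo a b ∩ B.image f = ∅) (hcol : R (T.ncolor a) (T.ncolor b)) :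
    T.cdist a b ∈ legDistSet R S + {n | g ∣ n} := by
  obtain ⟨a₀, ha₀, rfl⟩ := Finset.mem_image.mp ha
  obtain ⟨b₀, hb₀, rfl⟩ := Finset.mem_image.mp hb
  rw [f.Ioo_inter_image_eq_empty_iff] at hIoo
  rw [f.ncolor_apply, f.ncolor_apply] at hcol
  exact mem_add_dvd_of_dvd_sub
    ⟨r, hr, B, hB, a₀, ha₀, b₀, hb₀, ne_of_apply_ne _ hab, hIoo, hcol, rfl⟩
    (hg.trans (f.tsum_sub_tsum_dvd_cdist_sub a₀ b₀))

lemma cdist_mem_Xset_add {B₁ B₂ : Finset r.Point} (hB₁ : r.IsBlock B₁) (hB₂ : r.IsBlock B₂)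
    (hne : B₁.image f ≠ B₂.image f) (hcross : T.Cross (B₁.image f) (B₂.image f)) {a b : T.Point}
    (ha : a ∈ B₁.image f) (hb : b ∈ B₂.image f) : T.cdist a b ∈ Xset S + {n | g ∣ n} := by
  obtain ⟨a₀, ha₀, rfl⟩ := Finset.mem_image.mp ha
  obtain ⟨b₀, hb₀, rfl⟩ := Finset.mem_image.mp hb
  rw [f.cross_image_iff] at hcross
  exact mem_add_dvd_of_dvd_sub
    ⟨r, hr, B₁, B₂, hB₁, hB₂, fun h => hne (h ▸ rfl), hcross, a₀, ha₀, b₀, hb₀, rfl⟩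
    (hg.trans (f.tsum_sub_tsum_dvd_cdist_sub a₀ b₀))

end ArcEmbedding

lemma pos_lt_size (p : TCP) (x : p.Point) : p.pos x < p.size := by
  cases x <;> simp only [pos, size] <;> omega

lemma relpos_eq (p : TCP) (x y : p.Point) : p.relpos x y =
    if p.pos x ≤ p.pos y then p.pos y - p.pos x else p.size + p.pos y - p.pos x := by
  have hx := p.pos_lt_size x
  have hy := p.pos_lt_size y
  rw [relpos]
  split_ifs with h
  · rw [show p.size + p.pos y - p.pos x = p.pos y - p.pos x + p.size by omega, Nat.add_mod_right,
      Nat.mod_eq_of_lt (by omega)]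
  · exact Nat.mod_eq_of_lt (by omega)

section Tensor

variable (p q : TCP)

lemma size_tensor : (p.tensor q).size = p.size + q.size := by
  simp only [size, tensor]
  omega

lemma pos_tinl (x : p.Point) : (p.tensor q).pos (tinl p q x) =
    p.pos x + if p.lower ≤ p.pos x then q.size else 0 := by
  split_ifs with h <;> cases x with
  | inl j => have := j.isLt; simp only [pos, tinl, tensor, size, Fin.val_castAdd] at h ⊢; omega
  | inr i => have := i.isLt; simp only [pos, tinl, tensor, size, Fin.val_castAdd] at h ⊢; omega

lemma pos_tinr (y : q.Point) : (p.tensor q).pos (tinr p q y) = q.pos y + p.lower := by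
  cases y with
  | inl j => have := j.isLt; simp only [pos, tinr, tensor, Fin.val_natAdd]; omega
  | inr i => simp only [pos, tinr, tensor, Fin.val_natAdd]; omega

lemma ncolor_tinl (x : p.Point) : (p.tensor q).ncolor (tinl p q x) = p.ncolor x := by
  cases x <;> simp [ncolor, tinl, tensor]

lemma ncolor_tinr (y : q.Point) : (p.tensor q).ncolor (tinr p q y) = q.ncolor y := by
  cases y <;> simp [ncolor, tinr, tensor]

lemma ptmap_tinl (x : p.Point) : ptmap p q (tinl p q x) = .inl x := by
  cases x <;> simp [ptmap, tinl]

lemma ptmap_tinr (y : q.Point) : ptmap p q (tinr p q y) = .inr y := by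
  cases y <;> simp [ptmap, tinr]

lemma rel_tensor (z z' : (p.tensor q).Point) :
    (p.tensor q).rel.r z z' ↔ sumRel p.rel.r q.rel.r (ptmap p q z) (ptmap p q z') :=
  Iff.rfl

lemma mem_range_tinl_or_tinr (z : (p.tensor q).Point) :
    z ∈ Set.range (tinl p q) ∨ z ∈ Set.range (tinr p q) := by
  rcases z with j | i
  · rcases h : finSumFinEquiv.symm j with a | a
    · exact .inl ⟨.inl a, by simp [tinl, (Equiv.symm_apply_eq _).mp h]⟩
    · exact .inr ⟨.inl a, by simp [tinr, (Equiv.symm_apply_eq _).mp h]⟩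
  · rcases h : finSumFinEquiv.symm i with a | a
    · exact .inl ⟨.inr a, by simp [tinl, (Equiv.symm_apply_eq _).mp h]⟩
    · exact .inr ⟨.inr a, by simp [tinr, (Equiv.symm_apply_eq _).mp h]⟩

/-- The arc of `q` sits between the rightmost lower and the rightmost upper point of `p`. -/
def tensorLeft : ArcEmbedding p (p.tensor q) where
  toFun := tinl p q
  injective x y h := by simpa [ptmap_tinl] using congrArg (ptmap p q) h
  ncolor_apply := ncolor_tinl p q
  rel_apply x y := by rw [rel_tensor, ptmap_tinl, ptmap_tinl]; rfl
  not_rel_of_notMem_range x z hz := by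
    obtain ⟨y, rfl⟩ := (mem_range_tinl_or_tinr p q z).resolve_left hz
    rw [rel_tensor, ptmap_tinl, ptmap_tinr]
    exact id
  cut x := if p.lower ≤ p.pos x then p.size + p.lower - p.pos x else p.lower - p.pos x
  cut_pos x := by have := p.pos_lt_size x; split_ifs <;> omega
  gap := q.size
  relpos_apply x y := by
    have : p.lower ≤ p.size := Nat.le_add_left _ _
    have := p.pos_lt_size x
    have := p.pos_lt_size y
    rw [relpos_eq, relpos_eq, size_tensor, pos_tinl, pos_tinl]
    split_ifs <;> omega
  relpos_of_notMem_range x z hz := by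
    obtain ⟨y, rfl⟩ := (mem_range_tinl_or_tinr p q z).resolve_left hz
    have := p.pos_lt_size x
    have := q.pos_lt_size y
    rw [relpos_eq, size_tensor, pos_tinl, pos_tinr]
    split_ifs <;> omega

/-- The arc of `p` starts right after the last point of `q` in the cyclic order. -/
def tensorRight : ArcEmbedding q (p.tensor q) where
  toFun := tinr p q
  injective x y h := by simpa [ptmap_tinr] using congrArg (ptmap p q) h
  ncolor_apply := ncolor_tinr p q
  rel_apply x y := by rw [rel_tensor, ptmap_tinr, ptmap_tinr]; rfl
  not_rel_of_notMem_range y z hz := by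
    obtain ⟨x, rfl⟩ := (mem_range_tinl_or_tinr p q z).resolve_right hz
    rw [rel_tensor, ptmap_tinl, ptmap_tinr]
    exact id
  cut y := q.size - q.pos y
  cut_pos y := by have := q.pos_lt_size y; omega
  gap := p.size
  relpos_apply x y := by
    have := q.pos_lt_size x
    have := q.pos_lt_size y
    rw [relpos_eq, relpos_eq, size_tensor, pos_tinr, pos_tinr]
    split_ifs <;> omega
  relpos_of_notMem_range y z hz := by
    obtain ⟨x, rfl⟩ := (mem_range_tinl_or_tinr p q z).resolve_right hz
    have : p.lower ≤ p.size := Nat.le_add_left _ _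
    have := p.pos_lt_size x
    have := q.pos_lt_size y
    rw [relpos_eq, size_tensor, pos_tinl, pos_tinr]
    split_ifs <;> omega

end Tensor

section TensorAnalyzer

variable (p q : TCP)

lemma tsum_tensor : (p.tensor q).tsum = p.tsum + q.tsum := by
  simp only [tsum, csum, Fintype.sum_sum_type]
  change ∑ j : Fin (p.upper + q.upper), _ + ∑ i : Fin (p.lower + q.lower), _ = _
  simp only [Fin.sum_univ_add, sgn, ncolor, tensor, finSumFinEquiv_symm_apply_castAdd,
    finSumFinEquiv_symm_apply_natAdd, Sum.elim_inl, Sum.elim_inr]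
  abel_nf

lemma isBlock_tensor_iff {B : Finset (p.tensor q).Point} :
    (p.tensor q).IsBlock B ↔ (∃ B', p.IsBlock B' ∧ B'.image (tensorLeft p q) = B) ∨
      ∃ B', q.IsBlock B' ∧ B'.image (tensorRight p q) = B := by
  constructor
  · rintro ⟨z, rfl⟩
    rcases mem_range_tinl_or_tinr p q z with ⟨x, rfl⟩ | ⟨y, rfl⟩
    · exact .inl ⟨_, ⟨x, rfl⟩, ((tensorLeft p q).blockOf_apply x).symm⟩
    · exact .inr ⟨_, ⟨y, rfl⟩, ((tensorRight p q).blockOf_apply y).symm⟩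
  · rintro (⟨B', hB', rfl⟩ | ⟨B', hB', rfl⟩)
    exacts [(tensorLeft p q).isBlock_image hB', (tensorRight p q).isBlock_image hB']

lemma Fset_tensor : Fset {p.tensor q} = Fset {p, q} := by
  ext n
  simp [Fset, isBlock_tensor_iff, or_and_right, exists_or,
    Finset.card_image_of_injective _ (tensorLeft p q).injective,
    Finset.card_image_of_injective _ (tensorRight p q).injective]

lemma Vset_tensor : Vset {p.tensor q} = Vset {p, q} := by
  ext n
  simp [Vset, isBlock_tensor_iff, or_and_right, exists_or, ArcEmbedding.csum_image]

lemma tensorRight_notMem_range_tensorLeft (y : q.Point) :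
    tensorRight p q y ∉ Set.range (tensorLeft p q) := by
  rintro ⟨x, hx⟩
  simpa [tensorLeft, tensorRight, ptmap_tinl, ptmap_tinr] using congrArg (ptmap p q) hx

lemma tensorLeft_notMem_range_tensorRight (x : p.Point) :
    tensorLeft p q x ∉ Set.range (tensorRight p q) := by
  rintro ⟨y, hy⟩
  simpa [tensorLeft, tensorRight, ptmap_tinl, ptmap_tinr] using congrArg (ptmap p q) hy

lemma gcd_dvd_tsum_tensor_sub_left :
    (Int.gcd p.tsum q.tsum : ℤ) ∣ (p.tensor q).tsum - p.tsum := by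
  rw [tsum_tensor, add_sub_cancel_left]
  exact Int.gcd_dvd_right _ _

lemma gcd_dvd_tsum_tensor_sub_right :
    (Int.gcd p.tsum q.tsum : ℤ) ∣ (p.tensor q).tsum - q.tsum := by
  rw [tsum_tensor, add_sub_cancel_right]
  exact Int.gcd_dvd_left _ _

lemma legDistSet_tensor_subset (R : Bool → Bool → Prop) :
    legDistSet R {p.tensor q} ⊆ legDistSet R {p, q} + {n | (Int.gcd p.tsum q.tsum : ℤ) ∣ n} := by
  rintro d ⟨T, hT, B, hB, a, ha, b, hb, hab, hIoo, hcol, rfl⟩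
  obtain rfl := Set.mem_singleton_iff.mp hT
  rcases (isBlock_tensor_iff p q).mp hB with ⟨B', hB', rfl⟩ | ⟨B', hB', rfl⟩
  · exact (tensorLeft p q).cdist_mem_legDistSet_add (by simp) (gcd_dvd_tsum_tensor_sub_left p q)
      R hB' ha hb hab hIoo hcol
  · exact (tensorRight p q).cdist_mem_legDistSet_add (by simp) (gcd_dvd_tsum_tensor_sub_right p q)
      R hB' ha hb hab hIoo hcol

lemma Xset_tensor_subset :
    Xset {p.tensor q} ⊆ Xset {p, q} + {n | (Int.gcd p.tsum q.tsum : ℤ) ∣ n} := by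
  rintro d ⟨T, hT, C₁, C₂, hC₁, hC₂, hne, hcross, a, ha, b, hb, rfl⟩
  obtain rfl := Set.mem_singleton_iff.mp hT
  rcases (isBlock_tensor_iff p q).mp hC₁ with ⟨B₁, hB₁, rfl⟩ | ⟨B₁, hB₁, rfl⟩ <;>
    rcases (isBlock_tensor_iff p q).mp hC₂ with ⟨B₂, hB₂, rfl⟩ | ⟨B₂, hB₂, rfl⟩
  · exact (tensorLeft p q).cdist_mem_Xset_add (by simp) (gcd_dvd_tsum_tensor_sub_left p q) hB₁ hB₂
      hne hcross ha hb
  · exact absurd hcross <| (tensorLeft p q).not_cross_of_disjoint_range B₁ <|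
      Finset.forall_mem_image.mpr fun y _ => tensorRight_notMem_range_tensorLeft p q y
  · exact absurd hcross <| (tensorRight p q).not_cross_of_disjoint_range B₁ <|
      Finset.forall_mem_image.mpr fun x _ => tensorLeft_notMem_range_tensorRight p q x
  · exact (tensorRight p q).cdist_mem_Xset_add (by simp) (gcd_dvd_tsum_tensor_sub_right p q) hB₁
      hB₂ hne hcross ha hb

end TensorAnalyzer

end TCP

/-- behavior of the analyzer under tensor products. -/
theorem stmt6 (p q : TCP) :
    TCP.Fset {p.tensor q} = TCP.Fset {p, q} ∧
    TCP.Vset {p.tensor q} = TCP.Vset {p, q} ∧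
    (p.tensor q).tsum = p.tsum + q.tsum ∧
    TCP.Lset {p.tensor q} ⊆
      TCP.Lset {p, q} + {x : ℤ | (Int.gcd p.tsum q.tsum : ℤ) ∣ x} ∧
    TCP.Kset {p.tensor q} ⊆
      TCP.Kset {p, q} + {x : ℤ | (Int.gcd p.tsum q.tsum : ℤ) ∣ x} ∧
    TCP.Xset {p.tensor q} ⊆
      TCP.Xset {p, q} + {x : ℤ | (Int.gcd p.tsum q.tsum : ℤ) ∣ x} :=
  ⟨TCP.Fset_tensor p q, TCP.Vset_tensor p q, TCP.tsum_tensor p q,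
    TCP.legDistSet_tensor_subset p q Eq, TCP.legDistSet_tensor_subset p q Ne,
    TCP.Xset_tensor_subset p q⟩
end
end

section
/- The set of all two-colored partitions all of whose blocks have at most two legs and all of whose two-leg blocks are neutral is a category of two-colored partitions. -/
noncomputable section
attribute [local instance] Classical.propDecidable

/-! The condition on the blocks says that `p.rel` is a matching whose pairs have opposite
normalized colours; tensor products and the involution merely relabel points. For a composition,
let `σ` be the pairing of the two factors and `τ` the gluing of the middle rows, both acting on
the disjoint union of their points and both flipping the normalized colour of a point they move.
From an outer point `u` (so `τ u = u`) run the zigzag `c₀ = u, c₁ = σ u, c₂ = τ σ u, …`. Each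
of `σ`, `τ` maps `c_i` to `c_{i-1}` or `c_{i+1}`, so the points up to the first stall
`c_{J+1} = c_J` make up the whole block of `u`. The only other `τ`-fixed point among them is
`c_J`, reached after the odd number `J` of colour flips. -/

section ProperMatching

variable {α β : Type*}

structure IsProperMatching (r : α → α → Prop) (c : α → Bool) : Prop where
  eq_of_rel : ∀ ⦃x y z⦄, r x y → r x z → y ≠ x → z ≠ x → y = z
  color_ne : ∀ ⦃x y⦄, r x y → x ≠ y → c x ≠ c y

namespace IsProperMatching

variable {r : α → α → Prop} {c : α → Bool}

/-- `Bool` has two values, so two points coloured differently from a third share a colour. -/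
theorem of_injective (hc : Function.Injective c) : IsProperMatching r c where
  eq_of_rel _ _ _ _ _ hyx hzx := hc <|
    (Bool.eq_not.mpr (hc.ne hyx)).trans (Bool.eq_not.mpr (hc.ne hzx)).symm
  color_ne _ _ _ hne := hc.ne hne

theorem comap {r' : β → β → Prop} {c' : β → Bool} (h : IsProperMatching r c) {f : β → α}
    (hf : Function.Injective f) (hr : ∀ x y, r' x y → r (f x) (f y))
    (hc : ∀ x y, c (f x) ≠ c (f y) → c' x ≠ c' y) : IsProperMatching r' c' where
  eq_of_rel _ _ _ hxy hxz hyx hzx :=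
    hf <| h.eq_of_rel (hr _ _ hxy) (hr _ _ hxz) (hf.ne hyx) (hf.ne hzx)
  color_ne x y hxy hne := hc x y <| h.color_ne (hr _ _ hxy) (hf.ne hne)

theorem sumRel {t : β → β → Prop} {d : β → Bool} (hr : IsProperMatching r c)
    (ht : IsProperMatching t d) : IsProperMatching (TCP.sumRel r t) (Sum.elim c d) where
  eq_of_rel := by
    rintro (x | x) (y | y) (z | z) hxy hxz hyx hzx <;>
      first
      | exact hxy.elim
      | exact hxz.elim
      | simp only [ne_eq, Sum.inl.injEq, Sum.inr.injEq] at hyx hzx ⊢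
    · exact hr.eq_of_rel hxy hxz hyx hzx
    · exact ht.eq_of_rel hxy hxz hyx hzx
  color_ne := by
    rintro (x | x) (y | y) hxy hne <;>
      first
      | exact hxy.elim
      | simp only [ne_eq, Sum.inl.injEq, Sum.inr.injEq, Sum.elim_inl, Sum.elim_inr] at hne ⊢
    · exact hr.color_ne hxy hne
    · exact ht.color_ne hxy hne

theorem exists_involutive {r : Setoid α} (h : IsProperMatching r c) :
    ∃ σ : α → α, Function.Involutive σ ∧ (∀ x y, r x y → y = x ∨ y = σ x) ∧
      ∀ x, σ x ≠ x → c (σ x) ≠ c x := by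
  let σ x := if hx : ∃ y, r x y ∧ y ≠ x then hx.choose else x
  have σ_eq : ∀ {x y}, r x y → y ≠ x → σ x = y := fun {x y} hxy hyx => by
    have hx : ∃ y, r x y ∧ y ≠ x := ⟨y, hxy, hyx⟩
    simp only [σ, dif_pos hx]
    exact h.eq_of_rel hx.choose_spec.1 hxy hx.choose_spec.2 hyx
  have rel_σ : ∀ x, σ x ≠ x → r x (σ x) := fun x hx => by
    by_cases hex : ∃ y, r x y ∧ y ≠ x
    · simpa only [σ, dif_pos hex] using hex.choose_spec.1
    · simp only [σ, dif_neg hex, ne_eq, not_true_eq_false] at hx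
  refine ⟨σ, fun x => ?_, fun x y hxy => ?_,
    fun x hx => (h.color_ne (rel_σ x hx) hx.symm).symm⟩
  · by_cases hx : σ x = x
    · rw [hx, hx]
    · exact σ_eq (Setoid.symm (rel_σ x hx)) (Ne.symm hx)
  · by_cases hyx : y = x
    · exact .inl hyx
    · exact .inr (σ_eq hxy hyx).symm

end IsProperMatching

end ProperMatching

section Zigzag

variable {α : Type*} (σ τ : α → α)

def zigzag (u : α) : ℕ → α
  | 0 => u
  | n + 1 => (if Even n then σ else τ) (zigzag u n)

variable {σ τ} (hσ : Function.Involutive σ) (hτ : Function.Involutive τ) {u : α}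

theorem zigzag_succ (n : ℕ) :
    zigzag σ τ u (n + 1) = (if Even n then σ else τ) (zigzag σ τ u n) := rfl

include hσ hτ in
theorem zigzag_pred (n : ℕ) :
    zigzag σ τ u n = (if Even n then σ else τ) (zigzag σ τ u (n + 1)) := by
  rw [zigzag_succ]; split_ifs <;> simp [hσ _, hτ _]

include hσ hτ in
/-- Truncated subtraction is harmless at `n = 0`: there `τ u = u = zigzag σ τ u (0 - 1)`. -/
theorem apply_zigzag (hu : τ u = u) (n : ℕ) {f : α → α} (hf : f = σ ∨ f = τ) :
    f (zigzag σ τ u n) = zigzag σ τ u (n + 1) ∨ f (zigzag σ τ u n) = zigzag σ τ u (n - 1) := by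
  rcases n with _ | n
  · rcases hf with rfl | rfl
    · exact .inl rfl
    · exact .inr hu
  · have hnext := zigzag_succ (σ := σ) (τ := τ) (u := u) (n + 1)
    have hprev := zigzag_pred hσ hτ (u := u) n
    rw [Nat.add_sub_cancel]
    rcases hf with rfl | rfl <;> by_cases hn : Even n <;> simp_all [Nat.even_add_one]

include hσ hτ in
theorem Relation.EqvGen.mem_iff_of_closed {r : α → α → Prop}
    (hr : ∀ x y, r x y → y = x ∨ y = σ x ∨ y = τ x) {S : Set α}
    (hS : ∀ f, (f = σ ∨ f = τ) → ∀ x ∈ S, f x ∈ S) {x y : α} (h : Relation.EqvGen r x y) :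
    x ∈ S ↔ y ∈ S := by
  induction h with
  | rel x y hxy =>
    rcases hr x y hxy with rfl | rfl | rfl
    · rfl
    · exact ⟨hS σ (.inl rfl) x, fun hy => hσ x ▸ hS σ (.inl rfl) _ hy⟩
    · exact ⟨hS τ (.inr rfl) x, fun hy => hτ x ▸ hS τ (.inr rfl) _ hy⟩
  | refl => rfl
  | symm _ _ _ ih => exact ih.symm
  | trans _ _ _ _ _ ih₁ ih₂ => exact ih₁.trans ih₂

variable {r : α → α → Prop} (hr : ∀ x y, r x y → y = x ∨ y = σ x ∨ y = τ x)

include hσ hτ hr in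
theorem mem_range_zigzag (hu : τ u = u) {v : α} (h : Relation.EqvGen r u v) :
    v ∈ Set.range (zigzag σ τ u) := by
  refine (h.mem_iff_of_closed hσ hτ hr ?_).1 ⟨0, rfl⟩
  rintro f hf _ ⟨n, rfl⟩
  rcases apply_zigzag hσ hτ hu n hf with h | h <;> exact ⟨_, h.symm⟩

include hσ hτ hr in
theorem mem_zigzag_image_Iic (hu : τ u = u) {J : ℕ}
    (hJ : zigzag σ τ u (J + 1) = zigzag σ τ u J) {v : α} (h : Relation.EqvGen r u v) :
    v ∈ zigzag σ τ u '' Set.Iic J := by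
  refine (h.mem_iff_of_closed hσ hτ hr ?_).1 ⟨0, Nat.zero_le J, rfl⟩
  rintro f hf _ ⟨i, hi, rfl⟩
  rcases apply_zigzag hσ hτ hu i hf with h | h
  · rcases (Set.mem_Iic.1 hi).lt_or_eq with hi | rfl
    · exact ⟨i + 1, hi, h.symm⟩
    · exact ⟨i, hi, (h.trans hJ).symm⟩
  · exact ⟨i - 1, (Nat.sub_le i 1).trans hi, h.symm⟩

include hσ hτ in
theorem exists_zigzag_stall {n : ℕ} (hfix : τ (zigzag σ τ u n) = zigzag σ τ u n)
    (hne : zigzag σ τ u n ≠ u) : ∃ j, zigzag σ τ u (j + 1) = zigzag σ τ u j := by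
  rcases Nat.even_or_odd n with hn | hn
  · obtain ⟨j, rfl⟩ : ∃ j, n = j + 1 :=
      Nat.exists_eq_succ_of_ne_zero (by rintro rfl; exact hne rfl)
    have hj : ¬ Even j := by simpa [Nat.even_add_one] using hn
    refine ⟨j, ?_⟩
    rw [zigzag_pred hσ hτ j, if_neg hj, hfix]
  · exact ⟨n, by rw [zigzag_succ, if_neg (Nat.not_even_iff_odd.2 hn), hfix]⟩

include hσ hτ in
theorem zigzag_fixed_of_le_stall {J : ℕ}
    (hmin : ∀ j < J, zigzag σ τ u (j + 1) ≠ zigzag σ τ u j) {i : ℕ} (hi0 : i ≠ 0) (hiJ : i ≤ J)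
    (hfix : τ (zigzag σ τ u i) = zigzag σ τ u i) : i = J ∧ Odd i := by
  rcases Nat.even_or_odd i with hi | hi
  · obtain ⟨j, rfl⟩ := Nat.exists_eq_succ_of_ne_zero hi0
    have hj : ¬ Even j := by simpa [Nat.even_add_one] using hi
    refine absurd ?_ (hmin j (by omega))
    rw [zigzag_pred hσ hτ j, if_neg hj, hfix]
  · refine ⟨le_antisymm hiJ (not_lt.1 fun hlt => hmin i hlt ?_), hi⟩
    rw [zigzag_succ, if_neg (Nat.not_even_iff_odd.2 hi), hfix]

theorem zigzag_color_iff {s : α → Bool} (hσs : ∀ x, σ x ≠ x → s (σ x) ≠ s x)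
    (hτs : ∀ x, τ x ≠ x → s (τ x) ≠ s x) {J : ℕ}
    (hmin : ∀ j < J, zigzag σ τ u (j + 1) ≠ zigzag σ τ u j) :
    ∀ i ≤ J, (s (zigzag σ τ u i) = s u ↔ Even i) := by
  intro i
  induction i with
  | zero => simp [zigzag]
  | succ i ih =>
    intro hi
    have hflip : s (zigzag σ τ u (i + 1)) ≠ s (zigzag σ τ u i) := by
      have hmove := hmin i hi
      rw [zigzag_succ] at hmove ⊢
      split_ifs at hmove ⊢
      · exact hσs _ hmove
      · exact hτs _ hmove
    rw [Nat.even_add_one, ← ih (by omega)]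
    revert hflip
    cases s (zigzag σ τ u (i + 1)) <;> cases s (zigzag σ τ u i) <;> cases s u <;> decide

include hσ hτ hr in
theorem exists_first_zigzag_stall (hu : τ u = u) {v : α} (hv : τ v = v)
    (h : Relation.EqvGen r u v) (hne : v ≠ u) :
    ∃ J, zigzag σ τ u (J + 1) = zigzag σ τ u J ∧
      ∀ j < J, zigzag σ τ u (j + 1) ≠ zigzag σ τ u j := by
  obtain ⟨n, rfl⟩ := mem_range_zigzag hσ hτ hr hu h
  have hstall := exists_zigzag_stall hσ hτ hv hne
  exact ⟨Nat.find hstall, Nat.find_spec hstall, fun j => Nat.find_min hstall⟩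

include hσ hτ hr in
theorem eq_zigzag_stall (hu : τ u = u) {v : α} (hv : τ v = v) (h : Relation.EqvGen r u v)
    (hne : v ≠ u) {J : ℕ} (hJ : zigzag σ τ u (J + 1) = zigzag σ τ u J)
    (hmin : ∀ j < J, zigzag σ τ u (j + 1) ≠ zigzag σ τ u j) :
    v = zigzag σ τ u J ∧ Odd J := by
  obtain ⟨i, hiJ, rfl⟩ := mem_zigzag_image_Iic hσ hτ hr hu hJ h
  obtain ⟨rfl, hi⟩ :=
    zigzag_fixed_of_le_stall hσ hτ hmin (by rintro rfl; exact hne rfl) hiJ hv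
  exact ⟨rfl, hi⟩

include hσ hτ hr in
theorem IsProperMatching.eqvGen_fixedPoints {s : α → Bool}
    (hσs : ∀ x, σ x ≠ x → s (σ x) ≠ s x) (hτs : ∀ x, τ x ≠ x → s (τ x) ≠ s x) :
    IsProperMatching (fun x y : {x // τ x = x} => Relation.EqvGen r x y) (fun x => s x) where
  eq_of_rel x y z hxy hxz hyx hzx := by
    have hyx' : y.1 ≠ x.1 := Subtype.coe_ne_coe.2 hyx
    obtain ⟨J, hJ, hmin⟩ := exists_first_zigzag_stall hσ hτ hr x.2 y.2 hxy hyx'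
    exact Subtype.ext <| (eq_zigzag_stall hσ hτ hr x.2 y.2 hxy hyx' hJ hmin).1.trans
      (eq_zigzag_stall hσ hτ hr x.2 z.2 hxz (Subtype.coe_ne_coe.2 hzx) hJ hmin).1.symm
  color_ne x y hxy hne := by
    have hyx : y.1 ≠ x.1 := Subtype.coe_ne_coe.2 (Ne.symm hne)
    obtain ⟨J, hJ, hmin⟩ := exists_first_zigzag_stall hσ hτ hr x.2 y.2 hxy hyx
    obtain ⟨hy, hJodd⟩ := eq_zigzag_stall hσ hτ hr x.2 y.2 hxy hyx hJ hmin
    have := zigzag_color_iff hσs hτs hmin J le_rfl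
    simp only [← hy, Nat.not_even_iff_odd.2 hJodd, iff_false] at this
    exact Ne.symm this

end Zigzag

namespace TCP

theorem mem_blockOf {p : TCP} {x y : p.Point} : y ∈ p.blockOf x ↔ p.rel.r x y := by
  simp [blockOf]

theorem csum_pair_eq_zero_iff (p : TCP) {x y : p.Point} (hne : x ≠ y) :
    p.csum {x, y} = 0 ↔ p.ncolor x ≠ p.ncolor y := by
  simp only [csum, Finset.sum_pair hne, sgn]
  cases p.ncolor x <;> cases p.ncolor y <;> decide

theorem blockOf_eq_pair {p : TCP} (h : IsProperMatching p.rel.r p.ncolor) {x y : p.Point}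
    (hxy : p.rel.r x y) (hyx : y ≠ x) : p.blockOf x = {x, y} := by
  ext z
  simp only [mem_blockOf, Finset.mem_insert, Finset.mem_singleton]
  refine ⟨fun hxz => or_iff_not_imp_left.2 fun hzx => h.eq_of_rel hxz hxy hzx hyx, ?_⟩
  rintro (rfl | rfl)
  · exact p.rel.iseqv.refl _
  · exact hxy

theorem blocks_iff_isProperMatching (p : TCP) :
    (∀ B : Finset p.Point, p.IsBlock B → B.card ≤ 2 ∧ (B.card = 2 → p.csum B = 0)) ↔
      IsProperMatching p.rel.r p.ncolor := by
  constructor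
  · intro H
    refine ⟨fun x y z hxy hxz hyx hzx => by_contra fun hyz => ?_, fun x y hxy hne => ?_⟩
    · have : 2 < (p.blockOf x).card := Finset.two_lt_card.2
        ⟨x, mem_blockOf.2 (p.rel.iseqv.refl x), y, mem_blockOf.2 hxy, z, mem_blockOf.2 hxz,
          hyx.symm, hzx.symm, hyz⟩
      exact absurd (H _ ⟨x, rfl⟩).1 (by omega)
    · have hsub : {x, y} ⊆ p.blockOf x := by
        simp [Finset.insert_subset_iff, mem_blockOf, hxy]
      have hpair : p.blockOf x = {x, y} := (Finset.eq_of_subset_of_card_le hsub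
        (by rw [Finset.card_pair hne]; exact (H _ ⟨x, rfl⟩).1)).symm
      have hcard : (p.blockOf x).card = 2 := by rw [hpair, Finset.card_pair hne]
      rw [← csum_pair_eq_zero_iff p hne, ← hpair]
      exact (H _ ⟨x, rfl⟩).2 hcard
  · rintro h B ⟨x, rfl⟩
    by_cases hy : ∃ y, p.rel.r x y ∧ y ≠ x
    · obtain ⟨y, hxy, hyx⟩ := hy
      rw [blockOf_eq_pair h hxy hyx, Finset.card_pair hyx.symm,
        csum_pair_eq_zero_iff p hyx.symm]
      exact ⟨le_rfl, fun _ => h.color_ne hxy hyx.symm⟩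
    · have : p.blockOf x = {x} := by
        ext z
        simp only [mem_blockOf, Finset.mem_singleton]
        exact ⟨fun hxz => by_contra fun hzx => hy ⟨z, hxz, hzx⟩,
          fun hzx => hzx ▸ p.rel.iseqv.refl x⟩
      simp [this]

theorem ncolor_emptyP_injective : Function.Injective emptyP.ncolor := by
  rintro (x | x) <;> exact x.elim0

theorem ncolor_idPart_injective (c : Bool) : Function.Injective (idPart c).ncolor := by
  rintro (x | x) (y | y) h
  · exact congrArg Sum.inl (Subsingleton.elim (α := Fin 1) x y)
  · exact (Bool.not_ne_self c h).elim
  · exact (Bool.not_ne_self c h.symm).elim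
  · exact congrArg Sum.inr (Subsingleton.elim (α := Fin 1) x y)

theorem ncolor_lpair_injective {c₁ c₂ : Bool} (hc : c₁ ≠ c₂) :
    Function.Injective (lpair c₁ c₂).ncolor := by
  rintro (x | x) (y | y) h
  · exact x.elim0
  · exact x.elim0
  · exact y.elim0
  · fin_cases x <;> fin_cases y <;> simp_all [ncolor, lpair, eq_comm]

theorem ptmap_eq_sumSumSumComm (p q : TCP) : ptmap p q =
    Equiv.sumSumSumComm _ _ _ _ ∘ Sum.map finSumFinEquiv.symm finSumFinEquiv.symm := by
  funext x
  rcases x with j | i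
  · rcases hj : finSumFinEquiv.symm j with a | a <;> simp [ptmap, hj]
  · rcases hi : finSumFinEquiv.symm i with a | a <;> simp [ptmap, hi]

theorem ptmap_injective (p q : TCP) : Function.Injective (ptmap p q) := by
  rw [ptmap_eq_sumSumSumComm]
  exact (Equiv.injective _).comp (Sum.map_injective.2 ⟨Equiv.injective _, Equiv.injective _⟩)

theorem ncolor_tensor (p q : TCP) (x : (p.tensor q).Point) :
    (p.tensor q).ncolor x = Sum.elim p.ncolor q.ncolor (ptmap p q x) := by
  rcases x with j | i
  · rcases hj : finSumFinEquiv.symm j with a | a <;> simp [ncolor, tensor, ptmap, hj]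
  · rcases hi : finSumFinEquiv.symm i with a | a <;> simp [ncolor, tensor, ptmap, hi]

theorem ncolor_invol (p : TCP) (x : p.invol.Point) : p.invol.ncolor x = !p.ncolor x.swap := by
  rcases x with j | i
  · rfl
  · exact (Bool.not_not _).symm

theorem isProperMatching_tensor {p q : TCP} (hp : IsProperMatching p.rel.r p.ncolor)
    (hq : IsProperMatching q.rel.r q.ncolor) :
    IsProperMatching (p.tensor q).rel.r (p.tensor q).ncolor :=
  (hp.sumRel hq).comap (ptmap_injective p q) (fun _ _ h => h)
    (fun x y h => by rwa [ncolor_tensor, ncolor_tensor])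

theorem isProperMatching_invol {p : TCP} (hp : IsProperMatching p.rel.r p.ncolor) :
    IsProperMatching p.invol.rel.r p.invol.ncolor :=
  hp.comap Sum.swap_leftInverse.injective (fun _ _ h => h)
    (fun x y h => by rw [ncolor_invol, ncolor_invol]; exact h ∘ Bool.not_inj)

def midSwap (p q : TCP) (hl : p.upper = q.lower) : q.Point ⊕ p.Point → q.Point ⊕ p.Point
  | .inl (.inl j) => .inl (.inl j)
  | .inl (.inr m) => .inr (.inl (Fin.cast hl.symm m))
  | .inr (.inl j) => .inl (.inr (Fin.cast hl j))
  | .inr (.inr i) => .inr (.inr i)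

theorem midSwap_involutive (p q : TCP) (hl : p.upper = q.lower) :
    Function.Involutive (midSwap p q hl) := by
  rintro ((j | m) | (j | i)) <;> rfl

theorem ncolor_midSwap_ne {p q : TCP} (h : Composable p q) (x : q.Point ⊕ p.Point)
    (hx : midSwap p q h.len x ≠ x) :
    Sum.elim q.ncolor p.ncolor (midSwap p q h.len x) ≠ Sum.elim q.ncolor p.ncolor x := by
  rcases x with (j | m) | (j | i)
  · exact absurd rfl hx
  · have hc := h.col (Fin.cast h.len.symm m)
    simp only [midSwap, Sum.elim_inl, Sum.elim_inr, ncolor, hc]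
    exact Bool.not_ne_self _
  · simp only [midSwap, Sum.elim_inl, Sum.elim_inr, ncolor, h.col j]
    exact Bool.not_ne_self _ ∘ Eq.symm
  · exact absurd rfl hx

theorem isProperMatching_comp {p q : TCP} (h : Composable p q)
    (hp : IsProperMatching p.rel.r p.ncolor) (hq : IsProperMatching q.rel.r q.ncolor) :
    IsProperMatching (p.comp q h).rel.r (p.comp q h).ncolor := by
  obtain ⟨σ, hσ, hσr, hσc⟩ := (hq.sumRel hp).exists_involutive (r := sumSetoid q.rel p.rel)
  have hr : ∀ x y, compRel p q h.len x y → y = x ∨ y = σ x ∨ y = midSwap p q h.len x := by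
    rintro x y (⟨a, b, rfl, rfl, hab⟩ | ⟨a, b, rfl, rfl, hab⟩ | ⟨j, rfl, rfl⟩ | ⟨j, rfl, rfl⟩)
    · exact (hσr _ _ hab).imp_right .inl
    · exact (hσr _ _ hab).imp_right .inl
    · exact .inr (.inr rfl)
    · exact .inr (.inr rfl)
  refine (IsProperMatching.eqvGen_fixedPoints hσ (midSwap_involutive p q h.len) hr hσc
    (ncolor_midSwap_ne h)).comap
    (f := fun x => ⟨Sum.map Sum.inl Sum.inr x, by rcases x with j | i <;> rfl⟩) ?_ ?_ ?_
  · exact fun x y hxy => Sum.map_injective.2 ⟨Sum.inl_injective, Sum.inr_injective⟩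
      (congrArg Subtype.val hxy)
  · rintro (j | i) (j' | i') hxy <;> exact hxy
  · rintro (j | i) (j' | i') hxy <;> exact hxy

end TCP

/-- partitions with blocks of at most two legs, all two-leg blocks
neutral, form a category. -/
theorem stmt12 :
    TCP.IsCategory {p : TCP | ∀ B : Finset p.Point, p.IsBlock B →
      B.card ≤ 2 ∧ (B.card = 2 → p.csum B = 0)} := by
  simp only [TCP.blocks_iff_isProperMatching]
  exact ⟨.of_injective TCP.ncolor_emptyP_injective,
    .of_injective (TCP.ncolor_idPart_injective _), .of_injective (TCP.ncolor_idPart_injective _),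
    .of_injective (TCP.ncolor_lpair_injective (by decide)),
    .of_injective (TCP.ncolor_lpair_injective (by decide)),
    fun _ _ => TCP.isProperMatching_tensor, fun _ => TCP.isProperMatching_invol,
    fun _ _ h => TCP.isProperMatching_comp h⟩
end
end
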